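/- Let {a_ρ}_{ρ<λ} be a pseudo-convergent sequence in (K, ν) and f ∈ K[x] a polynomial such that {a_ρ} fixes the values of all formal derivatives ∂_i f (1 ≤ i ≤ deg f). If {a_ρ} fixes the value of f, then ν_{x-a_ρ}(f) = ν(f) for all sufficiently large ρ; if {a_ρ} does not fix the value of f, then ν_{x-a_ρ}(f) < ν(f) for every ρ < λ. -/

import Mathlib

/-!
Expand `f = ∑ ∂ᵢf(a_ρ) (x - a_ρ)ⁱ`. For `i ≥ 1` the terms eventually have values `βᵢ + i γ_ρ`,
and as `γ_ρ` increases strictly, one of these affine functions of `γ_ρ`, the `h`-th say, is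
eventually strictly the smallest. So `w_ρ = β_h + h γ_ρ` increases strictly, and it is the value
of `f(a_σ) - f(a_ρ)` for `σ > ρ`, since `ν(a_σ - a_ρ) = ν(x - a_ρ)`.

If `ν(f(a_ρ))` is eventually a constant `β`, then `β < w_ρ` eventually, so the constant term
`f(a_ρ)` is the unique term of least value and `ν_{x-a_ρ}(f) = ν(f) = β`. Otherwise
`ν(f(a_ρ)) = w_ρ` eventually, and for `ρ < σ < τ` with `σ, τ` large,
`ν_{x-a_ρ}(f) ≤ ν(f(a_σ)) = w_σ < w_τ ≤ ν_{x-a_τ}(f) ≤ ν(f)`.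
-/

open Polynomial
open scoped Classical
noncomputable section

/-- `ν` is (the restriction to nonzero polynomials of) a valuation on `K[x]`,
nontrivial on `K`, with `ν(x) ≥ 0`.  Values are taken in a linearly ordered
field `Γ` (playing the role of the divisible hull of the value group). -/
structure IsVal {K : Type*} [Field K] {Γ : Type*} [Field Γ] [LinearOrder Γ] [IsStrictOrderedRing Γ]
    (ν : Polynomial K → Γ) : Prop where
  map_mul : ∀ f g : Polynomial K, f ≠ 0 → g ≠ 0 → ν (f * g) = ν f + ν g
  map_add : ∀ f g : Polynomial K, f ≠ 0 → g ≠ 0 → f + g ≠ 0 →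
    min (ν f) (ν g) ≤ ν (f + g)
  nontrivial : ∃ a : K, a ≠ 0 ∧ ν (C a) ≠ 0
  nonneg_x : 0 ≤ ν X

/-- `ε(f) = max_{b ≥ 1, ∂_b f ≠ 0} (ν(f) - ν(∂_b f))/b`, where `∂_b` is the
`b`-th formal (Hasse) derivative.  (Terms with `∂_b f = 0` correspond to the
value `-∞` and are omitted from the maximum.) -/
noncomputable def eps {K : Type*} [Field K] {Γ : Type*} [Field Γ] [LinearOrder Γ] [IsStrictOrderedRing Γ]
    (ν : Polynomial K → Γ) (f : Polynomial K) : Γ :=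
  if h : ((Finset.Icc 1 f.natDegree).filter
      fun b => Polynomial.hasseDeriv b f ≠ 0).Nonempty then
    ((Finset.Icc 1 f.natDegree).filter
      fun b => Polynomial.hasseDeriv b f ≠ 0).sup' h
      fun b => (ν f - ν (Polynomial.hasseDeriv b f)) / (b : Γ)
  else 0

/-- A monic (nonconstant) polynomial `Q` is a key polynomial for `ν` if every
`f ∈ K[x]` with `ε(f) ≥ ε(Q)` satisfies `deg f ≥ deg Q`. -/
def IsKeyPol {K : Type*} [Field K] {Γ : Type*} [Field Γ] [LinearOrder Γ] [IsStrictOrderedRing Γ]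
    (ν : Polynomial K → Γ) (Q : Polynomial K) : Prop :=
  Q.Monic ∧ 1 ≤ Q.natDegree ∧
    ∀ f : Polynomial K, 1 ≤ f.natDegree → eps ν Q ≤ eps ν f →
      Q.natDegree ≤ f.natDegree

/-- The `i`-th coefficient `f_i` of the `q`-standard expansion
`f = Σ f_i q^i` (each `f_i = 0` or `deg f_i < deg q`), for `q` monic. -/
noncomputable def qCoeff {K : Type*} [Field K] (q f : Polynomial K) (i : ℕ) :
    Polynomial K :=
  (f /ₘ q ^ i) %ₘ q

/-- The `q`-truncation `ν_q(f) = min_i ν(f_i q^i)` of `ν`, the minimum taken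
over the nonzero coefficients of the `q`-standard expansion of `f`. -/
noncomputable def truncVal {K : Type*} [Field K] {Γ : Type*}
    [Field Γ] [LinearOrder Γ] [IsStrictOrderedRing Γ] (ν : Polynomial K → Γ) (q f : Polynomial K) : Γ :=
  if h : ((Finset.range (f.natDegree + 1)).filter
      fun i => qCoeff q f i ≠ 0).Nonempty then
    ((Finset.range (f.natDegree + 1)).filter
      fun i => qCoeff q f i ≠ 0).inf' h
      fun i => ν (qCoeff q f i * q ^ i)
  else 0

/-- `I(Q) = {b : (ν(Q) - ν(∂_b Q))/b = ε(Q)}`. -/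
def Iset {K : Type*} [Field K] {Γ : Type*} [Field Γ] [LinearOrder Γ] [IsStrictOrderedRing Γ]
    (ν : Polynomial K → Γ) (Q : Polynomial K) : Set ℕ :=
  {b | 1 ≤ b ∧ Polynomial.hasseDeriv b Q ≠ 0 ∧
    (ν Q - ν (Polynomial.hasseDeriv b Q)) / (b : Γ) = eps ν Q}

/-- `S_Q(f) = {i : ν(f_i Q^i) = ν_Q(f)}` (over nonzero coefficients). -/
def Sset {K : Type*} [Field K] {Γ : Type*} [Field Γ] [LinearOrder Γ] [IsStrictOrderedRing Γ]
    (ν : Polynomial K → Γ) (q f : Polynomial K) : Set ℕ :=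
  {i | qCoeff q f i ≠ 0 ∧ ν (qCoeff q f i * q ^ i) = truncVal ν q f}


variable {K : Type*} [Field K] {Γ : Type*} [Field Γ] [LinearOrder Γ] [IsStrictOrderedRing Γ]
variable {Λ : Type*} [LinearOrder Λ] [Nonempty Λ] [NoMaxOrder Λ]
  [WellFoundedLT Λ]

/-- `{a_ρ}` is a pseudo-convergent sequence for `ν`. -/
def IsPCS (ν : Polynomial K → Γ) (a : Λ → K) : Prop :=
  ∀ ρ σ τ : Λ, ρ < σ → σ < τ →
    ν (C (a σ) - C (a ρ)) < ν (C (a τ) - C (a σ))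

/-- `x` is a limit of the pseudo-convergent sequence `{a_ρ}`:
`ν(x - a_ρ) = γ_ρ = ν(a_σ - a_ρ)` for all `σ > ρ`. -/
def XIsLimit (ν : Polynomial K → Γ) (a : Λ → K) : Prop :=
  ∀ ρ σ : Λ, ρ < σ → ν (X - C (a ρ)) = ν (C (a σ) - C (a ρ))

/-- `{a_ρ}` fixes the value of `f`: `ν(f(a_σ))` is eventually constant
(and in particular `f(a_σ)` is eventually nonzero). -/
def FixesVal (ν : Polynomial K → Γ) (a : Λ → K) (f : Polynomial K) : Prop :=
  ∃ ρ₀ : Λ, ∀ σ : Λ, ρ₀ ≤ σ → f.eval (a σ) ≠ 0 ∧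
    ν (C (f.eval (a σ))) = ν (C (f.eval (a ρ₀)))

/-- `{a_ρ}` has a limit in `K`. -/
def HasLimitInK (ν : Polynomial K → Γ) (a : Λ → K) : Prop :=
  ∃ c : K, ∀ ρ σ : Λ, ρ < σ → ν (C c - C (a ρ)) = ν (C (a σ) - C (a ρ))


namespace Polynomial

variable {R : Type*} [CommRing R]

theorem coeff_divByMonic_X_pow (p : R[X]) (i n : ℕ) :
    (p /ₘ X ^ i).coeff n = p.coeff (n + i) := by
  nontriviality R
  have hrem : (p %ₘ X ^ i).degree < (n + i : ℕ) :=
    (degree_modByMonic_lt p (monic_X_pow i)).trans_le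
      ((degree_X_pow_le i).trans (by exact_mod_cast Nat.le_add_left i n))
  conv_rhs => rw [← modByMonic_add_div p (X ^ i)]
  rw [coeff_add, coeff_eq_zero_of_degree_lt hrem, coeff_X_pow_mul', if_pos (Nat.le_add_left i n),
    Nat.add_sub_cancel, zero_add]

theorem taylor_divByMonic (r : R) (p : R[X]) {q : R[X]} (hq : q.Monic) :
    taylor r (p /ₘ q) = taylor r p /ₘ taylor r q := by
  nontriviality R
  have hq' : (taylor r q).Monic := (leadingCoeff_taylor r q).trans hq
  refine (div_modByMonic_unique _ (taylor r (p %ₘ q)) hq' ⟨?_, ?_⟩).1.symm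
  · rw [← taylor_mul, ← map_add, modByMonic_add_div]
  · rw [degree_taylor, degree_taylor]
    exact degree_modByMonic_lt p hq

theorem taylor_X_sub_C (r : R) : taylor r (X - C r) = X := by
  rw [map_sub, taylor_X, taylor_C, add_sub_cancel_right]

theorem sum_range_hasseDeriv_eval_mul_pow (f : R[X]) (b : R) :
    ∑ i ∈ Finset.range (f.natDegree + 1), C ((hasseDeriv i f).eval b) * (X - C b) ^ i = f := by
  conv_rhs => rw [← sum_taylor_eq f b]
  rw [sum_over_range' _ (fun _ => by rw [C_0, zero_mul]) _
    (by rw [natDegree_taylor]; exact Nat.lt_succ_self _)]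
  simp only [taylor_coeff]

theorem C_eval_eq_sum_range_hasseDeriv (f : R[X]) (b u : R) :
    C (f.eval u) =
      ∑ i ∈ Finset.range (f.natDegree + 1), C ((hasseDeriv i f).eval b) * C (u - b) ^ i := by
  conv_lhs => rw [← sum_range_hasseDeriv_eval_mul_pow f b]
  simp only [eval_finsetSum, eval_mul, eval_pow, eval_sub, eval_C, eval_X, map_sum, map_mul,
    map_pow]

theorem hasseDeriv_natDegree_eval (f : R[X]) (b : R) :
    (hasseDeriv f.natDegree f).eval b = f.leadingCoeff := by
  rw [← taylor_coeff, coeff_taylor_natDegree]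

theorem le_natDegree_of_hasseDeriv_eval_ne_zero {f : R[X]} {i : ℕ} {b : R}
    (h : (hasseDeriv i f).eval b ≠ 0) : i ≤ f.natDegree :=
  not_lt.1 fun hlt => h (by rw [hasseDeriv_eq_zero_of_lt_natDegree f i hlt, eval_zero])

theorem C_hasseDeriv_zero_eval_mul_pow_zero (f : R[X]) (b : R) (p : R[X]) :
    C ((hasseDeriv 0 f).eval b) * p ^ 0 = C (f.eval b) := by
  rw [hasseDeriv_zero, LinearMap.id_apply, pow_zero, mul_one]

end Polynomial

theorem qCoeff_X_sub_C (f : K[X]) (b : K) (i : ℕ) :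
    qCoeff (X - C b) f i = C ((hasseDeriv i f).eval b) := by
  rw [qCoeff, modByMonic_X_sub_C_eq_C_eval, ← taylor_coeff_zero,
    taylor_divByMonic _ _ ((monic_X_sub_C b).pow i), taylor_pow, taylor_X_sub_C,
    coeff_divByMonic_X_pow, zero_add, taylor_coeff]

namespace IsVal

variable {ν : K[X] → Γ} (hν : IsVal ν)
include hν

theorem map_one : ν 1 = 0 := by
  simpa using hν.map_mul 1 1 one_ne_zero one_ne_zero

theorem map_neg {f : K[X]} (hf : f ≠ 0) : ν (-f) = ν f := by
  have hneg_one : ν (-1) = 0 := by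
    have := hν.map_mul (-1) (-1) (neg_ne_zero.2 one_ne_zero) (neg_ne_zero.2 one_ne_zero)
    rw [neg_one_mul, neg_neg, hν.map_one] at this
    linarith
  rw [← neg_one_mul, hν.map_mul _ _ (neg_ne_zero.2 one_ne_zero) hf, hneg_one, zero_add]

theorem map_pow {f : K[X]} (hf : f ≠ 0) (n : ℕ) : ν (f ^ n) = n * ν f := by
  induction n with
  | zero => rw [pow_zero, hν.map_one, Nat.cast_zero, zero_mul]
  | succ n ih =>
    rw [pow_succ, hν.map_mul _ _ (pow_ne_zero _ hf) hf, ih]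
    push_cast
    ring

theorem map_C_mul_pow {c : K} (hc : c ≠ 0) {p : K[X]} (hp : p ≠ 0) (n : ℕ) :
    ν (C c * p ^ n) = ν (C c) + n * ν p := by
  rw [hν.map_mul _ _ (C_ne_zero.2 hc) (pow_ne_zero _ hp), hν.map_pow hp]

theorem map_C_mul_pow_congr {c : K} (hc : c ≠ 0) {p q : K[X]} (hp : p ≠ 0) (hq : q ≠ 0)
    (hpq : ν p = ν q) (n : ℕ) : ν (C c * p ^ n) = ν (C c * q ^ n) := by
  rw [hν.map_C_mul_pow hc hp, hν.map_C_mul_pow hc hq, hpq]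

theorem map_add_mem {U : Set Γ} (hU : IsUpperSet U) {f g : K[X]}
    (hf : f ≠ 0 → ν f ∈ U) (hg : g ≠ 0 → ν g ∈ U) (hfg : f + g ≠ 0) : ν (f + g) ∈ U := by
  by_cases hf0 : f = 0
  · simpa [hf0] using hg (by simpa [hf0] using hfg)
  by_cases hg0 : g = 0
  · simpa [hg0] using hf hf0
  refine hU (hν.map_add f g hf0 hg0 hfg) ?_
  rcases min_choice (ν f) (ν g) with h | h <;> rw [h]
  exacts [hf hf0, hg hg0]

theorem le_map_sub {c : Γ} {f g : K[X]} (hf : f ≠ 0 → c ≤ ν f) (hg : g ≠ 0 → c ≤ ν g)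
    (hfg : f - g ≠ 0) : c ≤ ν (f - g) := by
  rw [sub_eq_add_neg] at hfg ⊢
  refine hν.map_add_mem (isUpperSet_Ici c) hf (fun hg0 => ?_) hfg
  rw [Set.mem_Ici, hν.map_neg (neg_ne_zero.1 hg0)]
  exact hg (neg_ne_zero.1 hg0)

theorem map_sum_mem {U : Set Γ} (hU : IsUpperSet U) {ι : Type*} {s : Finset ι} {t : ι → K[X]}
    (ht : ∀ i ∈ s, t i ≠ 0 → ν (t i) ∈ U) (hs : ∑ i ∈ s, t i ≠ 0) : ν (∑ i ∈ s, t i) ∈ U := by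
  induction s using Finset.cons_induction with
  | empty => exact absurd Finset.sum_empty hs
  | cons j s hj ih =>
    rw [Finset.sum_cons] at hs ⊢
    exact hν.map_add_mem hU (ht j (Finset.mem_cons_self j s))
      (fun h => ih (fun i hi => ht i (Finset.mem_cons_of_mem hi)) h) hs

theorem map_add_eq_of_lt {f g : K[X]} (hf : f ≠ 0) (hg : g ≠ 0) (hlt : ν f < ν g) :
    f + g ≠ 0 ∧ ν (f + g) = ν f := by
  have hfg : f + g ≠ 0 := fun h => by
    rw [add_eq_zero_iff_eq_neg] at h
    rw [h, hν.map_neg hg] at hlt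
    exact hlt.false
  refine ⟨hfg, le_antisymm ?_ ?_⟩
  · have := hν.map_add (f + g) (-g) hfg (neg_ne_zero.2 hg) (by rwa [add_neg_cancel_right])
    rw [add_neg_cancel_right, hν.map_neg hg] at this
    exact (min_le_iff.1 this).resolve_right hlt.not_ge
  · simpa [min_eq_left hlt.le] using hν.map_add f g hf hg hfg

theorem map_sum_eq_of_lt {ι : Type*} [DecidableEq ι] {s : Finset ι} {t : ι → K[X]} {j : ι}
    (hj : j ∈ s) (htj : t j ≠ 0) (hlt : ∀ i ∈ s, i ≠ j → t i ≠ 0 → ν (t j) < ν (t i)) :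
    ∑ i ∈ s, t i ≠ 0 ∧ ν (∑ i ∈ s, t i) = ν (t j) := by
  rw [← Finset.add_sum_erase s t hj]
  by_cases hrest : ∑ i ∈ s.erase j, t i = 0
  · rw [hrest, add_zero]
    exact ⟨htj, rfl⟩
  refine hν.map_add_eq_of_lt htj hrest (hν.map_sum_mem (isUpperSet_Ioi _) (fun i hi => ?_) hrest)
  exact hlt i (Finset.mem_of_mem_erase hi) (Finset.ne_of_mem_erase hi)

end IsVal

section Truncation

variable {ν : K[X] → Γ}

theorem truncVal_X_sub_C_le (f : K[X]) (b : K) {i : ℕ} (hi : (hasseDeriv i f).eval b ≠ 0) :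
    truncVal ν (X - C b) f ≤ ν (C ((hasseDeriv i f).eval b) * (X - C b) ^ i) := by
  have hmem : i ∈ (Finset.range (f.natDegree + 1)).filter fun i => qCoeff (X - C b) f i ≠ 0 := by
    refine Finset.mem_filter.2
      ⟨Finset.mem_range_succ_iff.2 (le_natDegree_of_hasseDeriv_eval_ne_zero hi), ?_⟩
    rwa [qCoeff_X_sub_C, Ne, C_eq_zero]
  rw [truncVal, dif_pos ⟨i, hmem⟩, ← qCoeff_X_sub_C]
  exact Finset.inf'_le _ hmem

theorem le_truncVal_X_sub_C {f : K[X]} (hf : f ≠ 0) (b : K) {c : Γ}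
    (h : ∀ i, (hasseDeriv i f).eval b ≠ 0 → c ≤ ν (C ((hasseDeriv i f).eval b) * (X - C b) ^ i)) :
    c ≤ truncVal ν (X - C b) f := by
  have hne : ((Finset.range (f.natDegree + 1)).filter
      fun i => qCoeff (X - C b) f i ≠ 0).Nonempty := by
    refine ⟨f.natDegree, Finset.mem_filter.2 ⟨Finset.self_mem_range_succ _, ?_⟩⟩
    rw [qCoeff_X_sub_C, hasseDeriv_natDegree_eval, Ne, C_eq_zero, leadingCoeff_eq_zero]
    exact hf
  rw [truncVal, dif_pos hne]
  refine Finset.le_inf' _ _ fun i hi => ?_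
  have hi' : (hasseDeriv i f).eval b ≠ 0 := by
    rw [← C_ne_zero, ← qCoeff_X_sub_C]
    exact (Finset.mem_filter.1 hi).2
  rw [qCoeff_X_sub_C]
  exact h i hi'

variable (hν : IsVal ν)
include hν

theorem truncVal_X_sub_C_le_val {f : K[X]} (hf : f ≠ 0) (b : K) :
    truncVal ν (X - C b) f ≤ ν f := by
  conv_rhs => rw [← sum_range_hasseDeriv_eval_mul_pow f b]
  refine hν.map_sum_mem (isUpperSet_Ici _) (fun i _ hi => ?_)
    (by rwa [sum_range_hasseDeriv_eval_mul_pow])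
  exact truncVal_X_sub_C_le f b (left_ne_zero_of_mul hi |> C_ne_zero.1)

theorem truncVal_X_sub_C_le_val_C_eval {f : K[X]} {b u : K} (hub : u ≠ b)
    (hu : ν (C (u - b)) = ν (X - C b)) (hfu : f.eval u ≠ 0) :
    truncVal ν (X - C b) f ≤ ν (C (f.eval u)) := by
  rw [← C_ne_zero, C_eval_eq_sum_range_hasseDeriv f b u] at hfu
  rw [C_eval_eq_sum_range_hasseDeriv f b u]
  refine hν.map_sum_mem (isUpperSet_Ici _) (fun i _ hi => ?_) hfu
  have hc := left_ne_zero_of_mul hi |> C_ne_zero.1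
  rw [Set.mem_Ici, hν.map_C_mul_pow_congr hc (C_ne_zero.2 (sub_ne_zero.2 hub))
    (X_sub_C_ne_zero b) hu]
  exact truncVal_X_sub_C_le f b hc

theorem truncVal_X_sub_C_eq_val {f : K[X]} (hf : f ≠ 0) {b : K} (hb : f.eval b ≠ 0)
    (hlt : ∀ i ≠ 0, (hasseDeriv i f).eval b ≠ 0 →
      ν (C (f.eval b)) < ν (C ((hasseDeriv i f).eval b) * (X - C b) ^ i)) :
    truncVal ν (X - C b) f = ν f := by
  have hterm0 := C_hasseDeriv_zero_eval_mul_pow_zero f b (X - C b)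
  have hvf : ν f = ν (C (f.eval b)) := by
    have hdom := hν.map_sum_eq_of_lt (t := fun i => C ((hasseDeriv i f).eval b) * (X - C b) ^ i)
      (Finset.mem_range.2 f.natDegree.succ_pos) (by rwa [hterm0, Ne, C_eq_zero])
      fun i _ hi0 hi => hterm0 ▸ hlt i hi0 (left_ne_zero_of_mul hi |> C_ne_zero.1)
    rw [sum_range_hasseDeriv_eval_mul_pow, hterm0] at hdom
    exact hdom.2
  refine le_antisymm (truncVal_X_sub_C_le_val hν hf b) ?_
  rw [hvf]
  refine le_truncVal_X_sub_C hf b fun i hi => ?_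
  rcases eq_or_ne i 0 with rfl | hi0
  · rw [hterm0]
  · exact (hlt i hi0 hi).le

theorem truncVal_X_sub_C_eq_val_of_natDegree_eq_zero {f : K[X]} (hf : f ≠ 0)
    (hdeg : f.natDegree = 0) (b : K) : truncVal ν (X - C b) f = ν f := by
  refine truncVal_X_sub_C_eq_val hν hf ?_ fun i hi0 hi => absurd ?_ hi
  · rw [eq_C_of_natDegree_eq_zero hdeg, eval_C]
    exact fun h => hf (by rw [eq_C_of_natDegree_eq_zero hdeg, h, C_0])
  · rw [hasseDeriv_eq_zero_of_lt_natDegree f i (hdeg ▸ Nat.pos_of_ne_zero hi0), eval_zero]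

end Truncation

theorem IsVal.map_C_eval_sub_eq {ν : K[X] → Γ} (hν : IsVal ν) {f : K[X]} {b u : K}
    (hub : u ≠ b) (hu : ν (C (u - b)) = ν (X - C b)) {m : ℕ} (hm0 : m ≠ 0)
    (hm : (hasseDeriv m f).eval b ≠ 0)
    (hdom : ∀ i ≠ 0, i ≠ m → (hasseDeriv i f).eval b ≠ 0 →
      ν (C ((hasseDeriv m f).eval b) * (X - C b) ^ m) <
        ν (C ((hasseDeriv i f).eval b) * (X - C b) ^ i)) :
    C (f.eval u) - C (f.eval b) ≠ 0 ∧
      ν (C (f.eval u) - C (f.eval b)) = ν (C ((hasseDeriv m f).eval b) * (X - C b) ^ m) := by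
  have hsplit : C (f.eval u) - C (f.eval b) = ∑ i ∈ (Finset.range (f.natDegree + 1)).erase 0,
      C ((hasseDeriv i f).eval b) * C (u - b) ^ i := by
    rw [C_eval_eq_sum_range_hasseDeriv f b u,
      ← Finset.add_sum_erase _ _ (Finset.mem_range.2 f.natDegree.succ_pos),
      C_hasseDeriv_zero_eval_mul_pow_zero, add_sub_cancel_left]
  have hub' : C (u - b) ≠ 0 := C_ne_zero.2 (sub_ne_zero.2 hub)
  have hval : ∀ i, (hasseDeriv i f).eval b ≠ 0 →
      ν (C ((hasseDeriv i f).eval b) * C (u - b) ^ i) =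
        ν (C ((hasseDeriv i f).eval b) * (X - C b) ^ i) :=
    fun i hi => hν.map_C_mul_pow_congr hi hub' (X_sub_C_ne_zero b) hu i
  rw [hsplit, ← hval m hm]
  refine hν.map_sum_eq_of_lt (Finset.mem_erase.2 ⟨hm0, Finset.mem_range_succ_iff.2
    (le_natDegree_of_hasseDeriv_eval_ne_zero hm)⟩)
    (mul_ne_zero (C_ne_zero.2 hm) (pow_ne_zero _ hub')) fun i hi him hti => ?_
  have hti' := left_ne_zero_of_mul hti |> C_ne_zero.1
  rw [hval m hm, hval i hti']
  exact hdom i (Finset.ne_of_mem_erase hi) him hti'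

open Filter

theorem Finset.exists_mem_eventually_lt {α ι β : Type*} [Preorder β] {l : Filter α}
    {L : ι → α → β} {s : Finset ι} (hs : s.Nonempty)
    (hL : ∀ i ∈ s, ∀ j ∈ s, i ≠ j → (∀ᶠ x in l, L i x < L j x) ∨ ∀ᶠ x in l, L j x < L i x) :
    ∃ m ∈ s, ∀ᶠ x in l, ∀ i ∈ s, i ≠ m → L m x < L i x := by
  induction hs using Finset.Nonempty.cons_induction with
  | singleton j =>
    exact ⟨j, Finset.mem_singleton_self j,
      .of_forall fun _ i hi hij => absurd (Finset.mem_singleton.1 hi) hij⟩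
  | cons j s hj _ ih =>
    obtain ⟨m, hm, hmin⟩ := ih fun i hi k hk =>
      hL i (Finset.mem_cons_of_mem hi) k (Finset.mem_cons_of_mem hk)
    rcases hL j (Finset.mem_cons_self j s) m (Finset.mem_cons_of_mem hm)
      (fun h => hj (h ▸ hm)) with hjm | hmj
    · refine ⟨j, Finset.mem_cons_self j s, ?_⟩
      filter_upwards [hjm, hmin] with x hjm hmin i hi hij
      rcases Finset.mem_cons.1 hi with rfl | hi
      · exact absurd rfl hij
      rcases eq_or_ne i m with rfl | him
      · exact hjm
      · exact hjm.trans (hmin i hi him)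
    · refine ⟨m, Finset.mem_cons_of_mem hm, ?_⟩
      filter_upwards [hmj, hmin] with x hmj hmin i hi him
      rcases Finset.mem_cons.1 hi with rfl | hi
      · exact hmj
      · exact hmin i hi him

theorem StrictMono.eventually_gt_or_forall_lt {ι α : Type*} [Preorder ι] [NoMaxOrder ι]
    [LinearOrder α] {D : ι → α} (hD : StrictMono D) (c : α) :
    (∀ᶠ ρ in atTop, c < D ρ) ∨ ∀ ρ, D ρ < c := by
  by_cases h : ∃ ρ₀, c ≤ D ρ₀
  · obtain ⟨ρ₀, hρ₀⟩ := h
    exact Or.inl ((eventually_gt_atTop ρ₀).mono fun ρ hρ => hρ₀.trans_lt (hD hρ))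
  · simp only [not_exists, not_le] at h
    exact Or.inr h

theorem exists_mem_eventually_add_mul_lt {ι : Type*} [Preorder ι] [NoMaxOrder ι] {γ : ι → Γ}
    (hγ : StrictMono γ) (β : ℕ → Γ) {s : Finset ℕ} (hs : s.Nonempty) :
    ∃ m ∈ s, ∀ᶠ ρ in atTop, ∀ i ∈ s, i ≠ m → β m + m * γ ρ < β i + i * γ ρ := by
  refine Finset.exists_mem_eventually_lt (L := fun i ρ => β i + i * γ ρ) hs fun i hi j hj hij => ?_
  wlog hlt : i < j generalizing i j
  · exact (this j hj i hi hij.symm (hij.lt_or_gt.resolve_left hlt)).symm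
  have hD : StrictMono fun ρ => (β j + j * γ ρ) - (β i + i * γ ρ) := fun ρ σ h => by
    have hij : (i : Γ) < j := by exact_mod_cast hlt
    nlinarith [hγ h]
  rcases hD.eventually_gt_or_forall_lt 0 with h | h
  · exact Or.inl (h.mono fun ρ hρ => sub_pos.1 hρ)
  · exact Or.inr (.of_forall fun ρ => sub_neg.1 (h ρ))

section PseudoConvergent

variable {ι : Type*} [LinearOrder ι] {a : ι → K}

theorem IsPCS.strictMono_val_X_sub_C [NoMaxOrder ι] {Γ : Type*} [LinearOrder Γ] {ν : K[X] → Γ}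
    (hpcs : IsPCS ν a) (hlim : XIsLimit ν a) : StrictMono fun ρ => ν (X - C (a ρ)) := by
  intro ρ σ h
  obtain ⟨τ, hτ⟩ := exists_gt σ
  simp only [hlim ρ σ h, hlim σ τ hτ]
  exact hpcs ρ σ τ h hτ

theorem IsPCS.apply_ne_of_lt [NoMaxOrder ι] {Γ : Type*} [LinearOrder Γ] {ν : K[X] → Γ}
    (hpcs : IsPCS ν a) (hlim : XIsLimit ν a) {ρ σ : ι} (h : ρ < σ) : a σ ≠ a ρ := fun e =>
  (hpcs.strictMono_val_X_sub_C hlim h).ne (by simp only [e])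

theorem XIsLimit.val_C_sub {Γ : Type*} {ν : K[X] → Γ} (hlim : XIsLimit ν a) {ρ σ : ι}
    (h : ρ < σ) : ν (C (a σ - a ρ)) = ν (X - C (a ρ)) := by
  rw [C_sub, hlim ρ σ h]

theorem fixesVal_iff [Nonempty ι] {Γ : Type*} {ν : K[X] → Γ} {g : K[X]} :
    FixesVal ν a g ↔ ∃ c, ∀ᶠ σ in atTop, g.eval (a σ) ≠ 0 ∧ ν (C (g.eval (a σ))) = c := by
  constructor
  · rintro ⟨ρ₀, h⟩
    exact ⟨_, eventually_atTop.2 ⟨ρ₀, h⟩⟩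
  · rintro ⟨c, h⟩
    obtain ⟨ρ₀, hρ₀⟩ := eventually_atTop.1 h
    exact ⟨ρ₀, fun σ hσ => ⟨(hρ₀ σ hσ).1, (hρ₀ σ hσ).2.trans (hρ₀ ρ₀ le_rfl).2.symm⟩⟩

theorem fixesVal_of_natDegree_eq_zero [Nonempty ι] {Γ : Type*} {ν : K[X] → Γ} {f : K[X]}
    (hf : f ≠ 0) (hdeg : f.natDegree = 0) : FixesVal ν a f := by
  have hconst : ∀ u, f.eval u = f.coeff 0 := fun u => by
    rw [eq_C_of_natDegree_eq_zero hdeg, eval_C, coeff_C_zero]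
  have h0 : f.coeff 0 ≠ 0 := fun h => hf (by rw [eq_C_of_natDegree_eq_zero hdeg, h, C_0])
  exact fixesVal_iff.2 ⟨_, .of_forall fun σ => ⟨hconst (a σ) ▸ h0, by rw [hconst]⟩⟩

theorem exists_eventually_val_eval_eq [Nonempty ι] {Γ : Type*} [Nonempty Γ] {ν : K[X] → Γ}
    {s : Finset ℕ} {g : ℕ → K[X]} (h : ∀ i ∈ s, FixesVal ν a (g i)) :
    ∃ β : ℕ → Γ, ∀ᶠ ρ in atTop, ∀ i ∈ s, (g i).eval (a ρ) ≠ 0 ∧ ν (C ((g i).eval (a ρ))) = β i := by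
  choose! β hβ using fun i hi => fixesVal_iff.1 (h i hi)
  exact ⟨β, (eventually_all_finset s).2 hβ⟩

end PseudoConvergent

/-- In Kaplansky's Lemma 8, `w ρ = β_h + h γ_ρ`. -/
structure IsKaplanskyValue {ι Γ : Type*} [LinearOrder ι] [Preorder Γ] (ν : K[X] → Γ) (a : ι → K)
    (f : K[X]) (w : ι → Γ) : Prop where
  strictMono : StrictMono w
  le_val_term : ∀ᶠ ρ in atTop, ∀ i ≠ 0, (hasseDeriv i f).eval (a ρ) ≠ 0 →
    w ρ ≤ ν (C ((hasseDeriv i f).eval (a ρ)) * (X - C (a ρ)) ^ i)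
  val_sub : ∀ᶠ ρ in atTop, ∀ σ, ρ < σ → C (f.eval (a σ)) - C (f.eval (a ρ)) ≠ 0 ∧
    ν (C (f.eval (a σ)) - C (f.eval (a ρ))) = w ρ

section Kaplansky

variable {ι : Type*} [LinearOrder ι] [Nonempty ι] [NoMaxOrder ι] {ν : K[X] → Γ} {a : ι → K}

theorem exists_eventually_dominant_taylor_term (hν : IsVal ν) (hpcs : IsPCS ν a)
    (hlim : XIsLimit ν a) {f : K[X]} (hdeg : 0 < f.natDegree)
    (hder : ∀ i : ℕ, 1 ≤ i → i ≤ f.natDegree →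
      hasseDeriv i f ≠ 0 → FixesVal ν a (hasseDeriv i f)) :
    ∃ m ≠ 0, ∃ w : ι → Γ, StrictMono w ∧ ∀ᶠ ρ in atTop, (hasseDeriv m f).eval (a ρ) ≠ 0 ∧
      ν (C ((hasseDeriv m f).eval (a ρ)) * (X - C (a ρ)) ^ m) = w ρ ∧
      ∀ i ≠ 0, i ≠ m → (hasseDeriv i f).eval (a ρ) ≠ 0 →
        w ρ < ν (C ((hasseDeriv i f).eval (a ρ)) * (X - C (a ρ)) ^ i) := by
  set S := (Finset.Icc 1 f.natDegree).filter fun i => hasseDeriv i f ≠ 0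
  have hmemS : ∀ {i b}, i ≠ 0 → (hasseDeriv i f).eval b ≠ 0 → i ∈ S := fun hi0 hi =>
    Finset.mem_filter.2 ⟨Finset.mem_Icc.2 ⟨Nat.one_le_iff_ne_zero.2 hi0,
      le_natDegree_of_hasseDeriv_eval_ne_zero hi⟩, fun h => hi (by rw [h, eval_zero])⟩
  have hS : f.natDegree ∈ S := hmemS hdeg.ne' (b := 0) <| by
    rw [hasseDeriv_natDegree_eval, Ne, leadingCoeff_eq_zero]
    exact ne_zero_of_natDegree_gt hdeg
  have hγ := hpcs.strictMono_val_X_sub_C hlim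
  obtain ⟨β, hβ⟩ := exists_eventually_val_eval_eq (s := S) fun i hi =>
    have hi := Finset.mem_filter.1 hi
    hder i (Finset.mem_Icc.1 hi.1).1 (Finset.mem_Icc.1 hi.1).2 hi.2
  obtain ⟨m, hmS, hmin⟩ := exists_mem_eventually_add_mul_lt hγ β ⟨_, hS⟩
  have hm0 : m ≠ 0 := Nat.one_le_iff_ne_zero.1 (Finset.mem_Icc.1 (Finset.mem_filter.1 hmS).1).1
  refine ⟨m, hm0, fun ρ => β m + m * ν (X - C (a ρ)), fun ρ σ h =>
    add_lt_add_right (mul_lt_mul_of_pos_left (hγ h) (Nat.cast_pos.2 (Nat.pos_of_ne_zero hm0))) _,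
    ?_⟩
  filter_upwards [hβ, hmin] with ρ hβρ hminρ
  have hterm : ∀ i ∈ S, ν (C ((hasseDeriv i f).eval (a ρ)) * (X - C (a ρ)) ^ i) =
      β i + i * ν (X - C (a ρ)) := fun i hi => by
    rw [hν.map_C_mul_pow (hβρ i hi).1 (X_sub_C_ne_zero _), (hβρ i hi).2]
  refine ⟨(hβρ m hmS).1, hterm m hmS, fun i hi0 him hi => ?_⟩
  rw [hterm i (hmemS hi0 hi)]
  exact hminρ i (hmemS hi0 hi) him

theorem exists_isKaplanskyValue (hν : IsVal ν) (hpcs : IsPCS ν a)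
    (hlim : XIsLimit ν a) {f : K[X]} (hdeg : 0 < f.natDegree)
    (hder : ∀ i : ℕ, 1 ≤ i → i ≤ f.natDegree →
      hasseDeriv i f ≠ 0 → FixesVal ν a (hasseDeriv i f)) :
    ∃ w, IsKaplanskyValue ν a f w := by
  obtain ⟨m, hm0, w, hw, hdom⟩ := exists_eventually_dominant_taylor_term hν hpcs hlim hdeg hder
  refine ⟨w, hw, hdom.mono fun ρ ⟨_, hwm, hlt⟩ i hi0 hi => ?_, ?_⟩
  · rcases eq_or_ne i m with rfl | him
    · exact hwm.ge
    · exact (hlt i hi0 him hi).le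
  · filter_upwards [hdom] with ρ ⟨hm, hwm, hlt⟩ σ hσ
    rw [← hwm]
    exact hν.map_C_eval_sub_eq (hpcs.apply_ne_of_lt hlim hσ) (hlim.val_C_sub hσ) hm0 hm
      fun i hi0 him hi => hwm ▸ hlt i hi0 him hi

theorem eventually_truncVal_eq_of_fixesVal (hν : IsVal ν) {f : K[X]} (hf : f ≠ 0) {w : ι → Γ}
    (hK : IsKaplanskyValue ν a f w) (hfix : FixesVal ν a f) :
    ∀ᶠ ρ in atTop, truncVal ν (X - C (a ρ)) f = ν f := by
  obtain ⟨c, hc⟩ := fixesVal_iff.1 hfix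
  have hcw : ∀ᶠ ρ in atTop, c ≤ w ρ := by
    filter_upwards [hc, hK.val_sub] with ρ hcρ hρ
    obtain ⟨σ, hρσ, hcσ⟩ := ((eventually_gt_atTop ρ).and hc).exists
    rw [← (hρ σ hρσ).2]
    exact hν.le_map_sub (fun _ => hcσ.2.ge) (fun _ => hcρ.2.ge) (hρ σ hρσ).1
  obtain ⟨ρ₀, hρ₀⟩ := hcw.exists
  filter_upwards [hc, hK.le_val_term, eventually_gt_atTop ρ₀] with ρ ⟨h0, hcρ⟩ hterm hρ
  refine truncVal_X_sub_C_eq_val hν hf h0 fun i hi0 hi => ?_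
  rw [hcρ]
  exact (hρ₀.trans_lt (hK.strictMono hρ)).trans_le (hterm i hi0 hi)

theorem eventually_val_eval_eq_of_not_fixesVal (hν : IsVal ν) {f : K[X]} {w : ι → Γ}
    (hK : IsKaplanskyValue ν a f w) (hnfix : ¬FixesVal ν a f) :
    ∀ᶠ ρ in atTop, f.eval (a ρ) ≠ 0 ∧ ν (C (f.eval (a ρ))) = w ρ := by
  -- below `w ρ`, the value of `f (a σ)` would be fixed from `ρ` on
  have hge : ∀ᶠ ρ in atTop, f.eval (a ρ) ≠ 0 ∧ w ρ ≤ ν (C (f.eval (a ρ))) := by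
    filter_upwards [hK.val_sub] with ρ hρ
    by_contra hbad
    refine hnfix (fixesVal_iff.2 ?_)
    by_cases h0 : f.eval (a ρ) = 0
    · refine ⟨w ρ, (eventually_gt_atTop ρ).mono fun σ hσ => ?_⟩
      simp only [h0, C_0, sub_zero] at hρ
      exact ⟨C_ne_zero.1 (hρ σ hσ).1, (hρ σ hσ).2⟩
    · have hlt : ν (C (f.eval (a ρ))) < w ρ := not_le.1 fun h => hbad ⟨h0, h⟩
      refine ⟨ν (C (f.eval (a ρ))), (eventually_gt_atTop ρ).mono fun σ hσ => ?_⟩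
      have := hν.map_add_eq_of_lt (C_ne_zero.2 h0) (hρ σ hσ).1 ((hρ σ hσ).2 ▸ hlt)
      rw [add_sub_cancel] at this
      exact ⟨C_ne_zero.1 this.1, this.2⟩
  filter_upwards [hge, hK.val_sub] with ρ ⟨h0, hle⟩ hρ
  refine ⟨h0, hle.antisymm' (not_lt.1 fun hlt => ?_)⟩
  obtain ⟨σ, hρσ, hσ⟩ := ((eventually_gt_atTop ρ).and hge).exists
  have := hν.map_add_eq_of_lt (hρ σ hρσ).1 (C_ne_zero.2 h0) ((hρ σ hρσ).2 ▸ hlt)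
  rw [sub_add_cancel, (hρ σ hρσ).2] at this
  exact (hK.strictMono hρσ).not_ge (this.2 ▸ hσ.2)

theorem truncVal_lt_of_not_fixesVal (hν : IsVal ν) (hpcs : IsPCS ν a) (hlim : XIsLimit ν a)
    {f : K[X]} (hf : f ≠ 0) {w : ι → Γ} (hK : IsKaplanskyValue ν a f w)
    (hnfix : ¬FixesVal ν a f) (ρ : ι) : truncVal ν (X - C (a ρ)) f < ν f := by
  have hval := eventually_val_eval_eq_of_not_fixesVal hν hK hnfix
  obtain ⟨σ, hρσ, hσ⟩ := ((eventually_gt_atTop ρ).and hval).exists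
  obtain ⟨τ, hστ, hτ, hτterm⟩ := ((eventually_gt_atTop σ).and (hval.and hK.le_val_term)).exists
  have hwτ : w τ ≤ truncVal ν (X - C (a τ)) f := le_truncVal_X_sub_C hf _ fun i hi => by
    rcases eq_or_ne i 0 with rfl | hi0
    · rw [C_hasseDeriv_zero_eval_mul_pow_zero, hτ.2]
    · exact hτterm i hi0 hi
  calc truncVal ν (X - C (a ρ)) f
      ≤ ν (C (f.eval (a σ))) :=
        truncVal_X_sub_C_le_val_C_eval hν (hpcs.apply_ne_of_lt hlim hρσ) (hlim.val_C_sub hρσ) hσ.1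
    _ = w σ := hσ.2
    _ < w τ := hK.strictMono hστ
    _ ≤ truncVal ν (X - C (a τ)) f := hwτ
    _ ≤ ν f := truncVal_X_sub_C_le_val hν hf _

end Kaplansky

/-- If `{a_ρ}` fixes the values of all formal derivatives `∂_i f`
(`1 ≤ i ≤ deg f`), then: if it fixes the value of `f`, then
`ν_{x-a_ρ}(f) = ν(f)` for all large `ρ`; otherwise
`ν_{x-a_ρ}(f) < ν(f)` for every `ρ`. -/
theorem trunc_of_fixes (ν : Polynomial K → Γ) (hν : IsVal ν) (a : Λ → K)
    (hpcs : IsPCS ν a) (hlim : XIsLimit ν a) (f : Polynomial K) (hf : f ≠ 0)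
    (hder : ∀ i : ℕ, 1 ≤ i → i ≤ f.natDegree →
      Polynomial.hasseDeriv i f ≠ 0 → FixesVal ν a (Polynomial.hasseDeriv i f)) :
    (FixesVal ν a f → ∃ ρ₀ : Λ, ∀ ρ : Λ, ρ₀ ≤ ρ →
      truncVal ν (X - C (a ρ)) f = ν f) ∧
    (¬ FixesVal ν a f → ∀ ρ : Λ, truncVal ν (X - C (a ρ)) f < ν f) := by
  rcases Nat.eq_zero_or_pos f.natDegree with hdeg | hdeg
  · exact ⟨fun _ => ⟨Classical.arbitrary Λ, fun ρ _ =>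
        truncVal_X_sub_C_eq_val_of_natDegree_eq_zero hν hf hdeg _⟩,
      fun hnfix => absurd (fixesVal_of_natDegree_eq_zero hf hdeg) hnfix⟩
  · obtain ⟨w, hK⟩ := exists_isKaplanskyValue hν hpcs hlim hdeg hder
    exact ⟨fun hfix => eventually_atTop.1 (eventually_truncVal_eq_of_fixesVal hν hf hK hfix),
      truncVal_lt_of_not_fixesVal hν hpcs hlim hf hK⟩
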